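/- If for all t ≥ 1, Δ_{t+1} ≤ (1 - μη_t)Δ_t + η_t² B with step size η_t = 2/(μt + 2κμ - μ) where κ = β/μ ≥ 1, μ > 0, B ≥ 0, then Δ_t ≤ v/(t + 2κ - 1) for all t ≥ 1, where v = max{2κΔ_1, 4B/μ²}. -/
import Mathlib


theorem stmt_0 (Δ : ℕ → ℝ) (μ β B : ℝ) (hμ : 0 < μ) (hβ : μ ≤ β) (hB : 0 ≤ B)
    (hΔ : ∀ t, 0 ≤ Δ t)
    (η : ℕ → ℝ) (hη : ∀ t, η t = 2 / (μ * t + 2 * (β / μ) * μ - μ))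
    (hrec : ∀ t ≥ 1, Δ (t + 1) ≤ (1 - μ * η t) * Δ t + (η t) ^ 2 * B) :
    ∀ t ≥ 1, Δ t ≤ max (2 * (β / μ) * Δ 1) (4 * B / μ ^ 2) / (t + 2 * (β / μ) - 1) := by
  set κ : ℝ := β / μ with hκdef
  have hκ : 1 ≤ κ := (one_le_div hμ).2 hβ
  set v : ℝ := max (2 * κ * Δ 1) (4 * B / μ ^ 2) with hvdef
  have hv1 : 2 * κ * Δ 1 ≤ v := le_max_left _ _
  have hv2 : 4 * B / μ ^ 2 ≤ v := le_max_right _ _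
  have hv0 : 0 ≤ v := le_trans (by positivity) hv2
  intro t ht
  induction t, ht using Nat.le_induction with
  | base =>
    have h2κ : 0 < 2 * κ := by linarith
    have heq : ((1:ℕ) : ℝ) + 2 * κ - 1 = 2 * κ := by push_cast; ring
    rw [heq, le_div_iff₀ h2κ]
    linarith
  | succ t ht ih =>
    set a : ℝ := t + 2 * κ - 1 with hadef
    have hta : (1 : ℝ) ≤ (t : ℝ) := by exact_mod_cast ht
    have ha2 : 2 ≤ a := by simp only [hadef]; linarith
    have ha0 : 0 < a := by linarith
    have hηt : η t = 2 / (μ * a) := by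
      rw [hη t]; congr 1
      simp only [hadef]; ring
    have hrec' := hrec t ht
    rw [hηt] at hrec'
    have hμa : 0 < μ * a := by positivity
    have hcoef : 1 - μ * (2 / (μ * a)) = 1 - 2 / a := by
      field_simp
    rw [hcoef] at hrec'
    have hcoef0 : 0 ≤ 1 - 2 / a := by
      rw [sub_nonneg, div_le_one ha0]; exact ha2
    have hstep1 : (1 - 2 / a) * Δ t ≤ (1 - 2 / a) * (v / a) :=
      mul_le_mul_of_nonneg_left ih hcoef0
    have hstep2 : (2 / (μ * a)) ^ 2 * B ≤ v / a ^ 2 := by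
      have : (2 / (μ * a)) ^ 2 * B = (4 * B / μ ^ 2) / a ^ 2 := by
        field_simp; ring
      rw [this]
      exact div_le_div_of_nonneg_right hv2 (by positivity) |>.trans_eq rfl
    have hmid : Δ (t + 1) ≤ (a - 1) * v / a ^ 2 := by
      have : (1 - 2 / a) * (v / a) + v / a ^ 2 = (a - 1) * v / a ^ 2 := by
        field_simp; ring
      linarith [hrec', hstep1, hstep2, this.symm.le, this.le]
    have hgoal : ((t : ℝ) + 1) + 2 * κ - 1 = a + 1 := by simp [hadef]; ring
    push_cast
    rw [hgoal]
    refine hmid.trans ?_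
    rw [div_le_div_iff₀ (by positivity) (by linarith)]
    nlinarith
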